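/- arXiv:2505.00974 — 2 statements merged into one kernel-verified Lean document; each statement's English description precedes it below -/
import Mathlib

section
/- The evaluation vector y of the polynomial f_y(z_1,…,z_m) = (z_1⋯z_{q−1} + 1)(z_m + 1) over F_2^m has Hamming weight 2^{m−1} − 2^{m−q}. -/
/-!
Over `𝔽₂`, `(a + 1) * (b + 1) = 1` iff `a = b = 0`, and a product vanishes iff some factor does.
So `f_y(z) = 1` iff `z_m = 0` and not all of `z_1, …, z_{q-1}` are `1`: the support of `f_y` is
the cylinder `{z_m = 0}`, with `2^(m-1)` points, minus its subcylinder
`{z_m = 0, z_1 = ⋯ = z_{q-1} = 1}`, with `2^(m-q)` points.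
-/

open Finset

theorem Fintype.card_filter_forall_mem_eq {ι β : Type*} [Fintype ι] [DecidableEq ι] [Fintype β]
    (A : Finset ι) (g : ι → β) [DecidablePred fun f : ι → β => ∀ i ∈ A, f i = g i] :
    #{f : ι → β | ∀ i ∈ A, f i = g i} = Fintype.card β ^ (Fintype.card ι - #A) := by
  have hpi : ({f : ι → β | ∀ i ∈ A, f i = g i} : Finset _)
      = Fintype.piFinset fun i => if i ∈ A then {g i} else univ := by
    ext f
    simp only [mem_filter, mem_univ, true_and, Fintype.mem_piFinset]
    exact forall_congr' fun i => by split_ifs <;> simp [*]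
  rw [hpi, Fintype.card_piFinset]
  simp [apply_ite Finset.card, prod_ite, filter_not, card_sdiff_of_subset]

theorem ZMod.add_one_mul_add_one_eq_one_iff (a b : ZMod 2) :
    (a + 1) * (b + 1) = 1 ↔ a = 0 ∧ b = 0 := by
  revert a b; decide

theorem ZMod.prod_eq_zero_iff_not_forall_eq_one {ι : Type*} (s : Finset ι) (f : ι → ZMod 2) :
    ∏ i ∈ s, f i = 0 ↔ ¬ ∀ i ∈ s, f i = 1 := by
  have h (a : ZMod 2) : a = 0 ↔ ¬ a = 1 := by revert a; decide
  rw [prod_eq_zero_iff, not_forall]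
  simp only [h, Classical.not_imp]

theorem ZMod.card_filter_prod_add_one_mul_add_one_eq_one {ι : Type*} [Fintype ι] [DecidableEq ι]
    {B : Finset ι} {w : ι} (hw : w ∉ B) :
    #{z : ι → ZMod 2 | (∏ i ∈ B, z i + 1) * (z w + 1) = 1}
      = 2 ^ (Fintype.card ι - 1) - 2 ^ (Fintype.card ι - (#B + 1)) := by
  set g : ι → ZMod 2 := Function.update 1 w 0
  have hgw : g w = 0 := Function.update_self ..
  have hgB : ∀ i ∈ B, g i = 1 := fun i hi => Function.update_of_ne (ne_of_mem_of_not_mem hi hw) ..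
  set S : Finset (ι → ZMod 2) := {z | ∀ i ∈ ({w} : Finset ι), z i = g i}
  set T : Finset (ι → ZMod 2) := {z | ∀ i ∈ insert w B, z i = g i}
  have hsupport : #{z : ι → ZMod 2 | (∏ i ∈ B, z i + 1) * (z w + 1) = 1} = #(S \ T) := by
    congr 1
    ext z
    have hzB : (∀ i ∈ B, z i = g i) ↔ ∀ i ∈ B, z i = 1 :=
      forall₂_congr fun i hi => by rw [hgB i hi]
    simp only [ZMod.add_one_mul_add_one_eq_one_iff, ZMod.prod_eq_zero_iff_not_forall_eq_one,
      mem_filter, mem_sdiff, S, T, mem_univ, true_and, mem_singleton, forall_eq, forall_mem_insert,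
      hgw, hzB]
    tauto
  have hsub : T ⊆ S :=
    monotone_filter_right _ fun z _ h i hi => h i (singleton_subset_iff.2 (mem_insert_self w B) hi)
  rw [hsupport, card_sdiff_of_subset hsub, Fintype.card_filter_forall_mem_eq,
    Fintype.card_filter_forall_mem_eq, card_singleton, card_insert_of_notMem hw, ZMod.card]

/-- The evaluation vector of f_y(z) = (z_1⋯z_{q−1} + 1)(z_m + 1)
over F_2^m has Hamming weight 2^{m−1} − 2^{m−q}. -/
theorem weight_of_fy (m q : ℕ) (hq : 2 ≤ q) (hm : q ≤ m) :
    (Finset.univ.filter (fun z : Fin m → ZMod 2 =>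
        ((∏ i ∈ Finset.univ.filter (fun i : Fin m => (i : ℕ) < q - 1), z i) + 1) *
          (z ⟨m - 1, by omega⟩ + 1) = 1)).card
      = 2 ^ (m - 1) - 2 ^ (m - q) := by
  have hw : (⟨m - 1, by omega⟩ : Fin m) ∉ univ.filter fun i : Fin m => (i : ℕ) < q - 1 := by
    simp only [mem_filter, mem_univ, true_and]
    omega
  have hB : #{i : Fin m | (i : ℕ) < q - 1} = q - 1 := by
    rw [Fin.card_filter_val_lt]
    omega
  rw [ZMod.card_filter_prod_add_one_mul_add_one_eq_one hw, hB, Fintype.card_fin]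
  congr 2
  omega
end

section
/- For every monomial f of degree at most r in F_2[z_1,…,z_m] (including the constant monomial f = 1), with m ≥ q ≥ 2 and r ≥ 1, setting y = Eval((z_1⋯z_{q−1}+1)(z_m+1)), adding the evaluation vector of f to y increases the Hamming weight by at least 2^{m−r−q+1}: wt(y + Eval(f)) − wt(y) ≥ 2^{m−r−q+1}. -/
open Finset

lemma zmod2_eq_zero_iff_ne_one (x : ZMod 2) : x = 0 ↔ ¬ x = 1 := by revert x; decide

lemma zmod2_add_eq_one (x y : ZMod 2) :
    x + y = 1 ↔ (x = 1 ∧ y = 0) ∨ (x = 0 ∧ y = 1) := by revert x y; decide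

lemma zmod2_g_eq_one (p x : ZMod 2) :
    (p + 1) * (x + 1) = 1 ↔ (p = 0 ∧ x = 0) := by revert p x; decide

lemma prod_zmod2_eq_one_iff {ι : Type*} (S : Finset ι) (z : ι → ZMod 2) :
    ∏ i ∈ S, z i = 1 ↔ ∀ i ∈ S, z i = 1 := by
  constructor
  · intro h i hi
    by_contra hne
    have h0 : z i = 0 := (zmod2_eq_zero_iff_ne_one _).2 hne
    rw [Finset.prod_eq_zero hi h0] at h
    exact absurd h (by decide)
  · exact Finset.prod_eq_one

lemma card_fixed (m : ℕ) (S : Finset (Fin m)) (w : Fin m → ZMod 2) :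
    (Finset.univ.filter (fun z : Fin m → ZMod 2 => ∀ i ∈ S, z i = w i)).card
      = 2 ^ (m - S.card) := by
  classical
  have h := Fintype.card_subtype (fun z : Fin m → ZMod 2 => ∀ i ∈ S, z i = w i)
  rw [← h]
  have e : {z : Fin m → ZMod 2 // ∀ i ∈ S, z i = w i} ≃ ({i : Fin m // i ∉ S} → ZMod 2) :=
    { toFun := fun z i => z.1 i.1
      invFun := fun g => ⟨fun i => if h : i ∈ S then w i else g ⟨i, h⟩, by
        intro i hi; simp [hi]⟩
      left_inv := by
        rintro ⟨z, hz⟩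
        ext i
        dsimp
        split
        · exact (hz i ‹_›).symm
        · rfl
      right_inv := by
        intro g; funext i
        simp [i.2] }
  rw [Fintype.card_congr e, Fintype.card_fun]
  have h1 : Fintype.card {i : Fin m // i ∉ S} = m - S.card := by
    rw [Fintype.card_subtype_compl, Fintype.card_coe, Fintype.card_fin]
  rw [h1]
  norm_num

lemma main_aux (m q r : ℕ) (hq : 2 ≤ q) (hm : q ≤ m) (hr : 1 ≤ r)
    (J : Finset (Fin m)) (hJr : J.card ≤ r) (last : Fin m) (hlastv : (last : ℕ) = m - 1) :
    ((2 : ℤ) ^ (m - r - (q - 1)))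
      ≤ ((Finset.univ.filter (fun z : Fin m → ZMod 2 =>
            ((∏ i ∈ Finset.univ.filter (fun i : Fin m => (i : ℕ) < q - 1), z i) + 1) *
              (z last + 1) + (∏ j ∈ J, z j) = 1)).card : ℤ)
        - ((Finset.univ.filter (fun z : Fin m → ZMod 2 =>
            ((∏ i ∈ Finset.univ.filter (fun i : Fin m => (i : ℕ) < q - 1), z i) + 1) *
              (z last + 1) = 1)).card : ℤ) := by
  classical
  set A : Finset (Fin m) := Finset.univ.filter (fun i : Fin m => (i : ℕ) < q - 1) with hA
  have hAcard : A.card = q - 1 := by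
    have h1 : ∀ x ∈ Finset.range (q - 1), x < m := fun x hx => by
      simp only [Finset.mem_range] at hx; omega
    have h2 : A = (Finset.range (q - 1)).attachFin h1 := by
      ext i; simp [hA, Finset.mem_attachFin]
    rw [h2, Finset.card_attachFin, Finset.card_range]
  have hlastA : last ∉ A := by
    simp only [hA, Finset.mem_filter, Finset.mem_univ, true_and, hlastv]
    omega
  -- predicates
  set pA : (Fin m → ZMod 2) → Prop := fun z => ∀ i ∈ A, z i = 1 with hpA
  set pJ : (Fin m → ZMod 2) → Prop := fun z => ∀ i ∈ J, z i = 1 with hpJ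
  set P0 : (Fin m → ZMod 2) → Prop := fun z => (¬ pA z) ∧ z last = 0 with hP0
  -- rewrite the two filters
  have hfilt0 :
      (Finset.univ.filter (fun z : Fin m → ZMod 2 =>
        ((∏ i ∈ A, z i) + 1) * (z last + 1) = 1))
      = Finset.univ.filter P0 := by
    apply Finset.filter_congr
    intro z _
    rw [zmod2_g_eq_one, zmod2_eq_zero_iff_ne_one (∏ i ∈ A, z i), prod_zmod2_eq_one_iff]
  have hfilt1 :
      (Finset.univ.filter (fun z : Fin m → ZMod 2 =>
        ((∏ i ∈ A, z i) + 1) * (z last + 1) + (∏ j ∈ J, z j) = 1))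
      = Finset.univ.filter (fun z => (P0 z ∧ ¬ pJ z) ∨ (¬ P0 z ∧ pJ z)) := by
    apply Finset.filter_congr
    intro z _
    have key : ∀ p x y : ZMod 2, (p + 1) * (x + 1) + y = 1 ↔
        (((¬ p = 1) ∧ x = 0) ∧ ¬ y = 1) ∨ ((¬ ((¬ p = 1) ∧ x = 0)) ∧ y = 1) := by decide
    rw [key, prod_zmod2_eq_one_iff, prod_zmod2_eq_one_iff]
  rw [hfilt0, hfilt1]
  -- cardinal abbreviations
  set N0 : ℕ := (Finset.univ.filter P0).card with hN0
  set C : ℕ := (Finset.univ.filter (fun z => P0 z ∧ pJ z)).card with hC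
  set TJ : ℕ := (Finset.univ.filter pJ).card with hTJdef
  have hTJ : TJ = 2 ^ (m - J.card) := by
    have heq : Finset.univ.filter pJ
        = Finset.univ.filter (fun z : Fin m → ZMod 2 => ∀ i ∈ J, z i = (fun _ => (1 : ZMod 2)) i) := by
      ext z; simp [hpJ]
    rw [hTJdef, heq, card_fixed]
  -- decompose Nf
  have hsplit : (Finset.univ.filter (fun z => (P0 z ∧ ¬ pJ z) ∨ (¬ P0 z ∧ pJ z))).card
      = (Finset.univ.filter (fun z => P0 z ∧ ¬ pJ z)).card
        + (Finset.univ.filter (fun z => ¬ P0 z ∧ pJ z)).card := by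
    rw [Finset.filter_or]
    apply Finset.card_union_of_disjoint
    rw [Finset.disjoint_left]
    intro z h1 h2
    simp only [Finset.mem_filter] at h1 h2
    exact h2.2.1 h1.2.1
  -- Nf + 2C = N0 + TJ
  have e1 : (Finset.univ.filter (fun z => P0 z ∧ pJ z)).card
      + (Finset.univ.filter (fun z => P0 z ∧ ¬ pJ z)).card = N0 := by
    rw [hN0, ← Finset.filter_filter P0 pJ, ← Finset.filter_filter P0 (fun z => ¬ pJ z)]
    exact Finset.card_filter_add_card_filter_not (p := pJ)
  have e2 : (Finset.univ.filter (fun z => pJ z ∧ P0 z)).card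
      + (Finset.univ.filter (fun z => pJ z ∧ ¬ P0 z)).card = TJ := by
    rw [hTJdef, ← Finset.filter_filter pJ P0, ← Finset.filter_filter pJ (fun z => ¬ P0 z)]
    exact Finset.card_filter_add_card_filter_not (p := P0)
  have e3 : (Finset.univ.filter (fun z => pJ z ∧ P0 z)).card = C := by
    rw [hC]; congr 1; ext z; simp only [Finset.mem_filter]; tauto
  have e4 : (Finset.univ.filter (fun z => ¬ P0 z ∧ pJ z)).card
      = (Finset.univ.filter (fun z => pJ z ∧ ¬ P0 z)).card := by
    congr 1; ext z; simp only [Finset.mem_filter]; tauto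
  set Nf : ℕ := (Finset.univ.filter (fun z => (P0 z ∧ ¬ pJ z) ∨ (¬ P0 z ∧ pJ z))).card with hNf
  have hbal : Nf + C + C = N0 + TJ := by omega
  have hmain : ((2 : ℤ) ^ (m - r - (q - 1))) ≤ (TJ : ℤ) - 2 * C := by
    by_cases hlastJ : last ∈ J
    · -- C = 0
      have hC0 : C = 0 := by
        rw [hC, Finset.card_eq_zero]
        ext z
        simp only [Finset.mem_filter, Finset.mem_univ, true_and, Finset.notMem_empty,
          iff_false]
        rintro ⟨⟨-, h0⟩, hj⟩
        have h1 : z last = 1 := hj last hlastJ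
        rw [h0] at h1
        exact absurd h1 (by decide)
      have hexp : m - r - (q - 1) ≤ m - J.card := by omega
      have hpow := pow_le_pow_right₀ (by norm_num : (1 : ℤ) ≤ 2) hexp
      rw [hC0, hTJ]
      push_cast
      linarith
    · -- last ∉ J
      set w : Fin m → ZMod 2 := fun i => if i = last then 0 else 1 with hw
      set u : ℕ := (A ∪ J).card with hu
      have hlastAJ : last ∉ A ∪ J := by
        simp only [Finset.mem_union]
        tauto
      have hj1 : J.card + 1 ≤ m := by
        simpa [Finset.card_insert_of_notMem hlastJ] using
          Finset.card_le_univ (insert last J)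
      have hu1 : u + 1 ≤ m := by
        simpa [Finset.card_insert_of_notMem hlastAJ] using
          Finset.card_le_univ (insert last (A ∪ J))
      have hju : J.card ≤ u := Finset.card_le_card Finset.subset_union_right
      have huq : u ≤ (q - 1) + J.card := by
        have := Finset.card_union_le A J
        omega
      have hF1 : (Finset.univ.filter (fun z : Fin m → ZMod 2 => ∀ i ∈ insert last J, z i = w i)).card
          = 2 ^ (m - (J.card + 1)) := by
        rw [card_fixed, Finset.card_insert_of_notMem hlastJ]
      have hFA : Finset.univ.filter (fun z : Fin m → ZMod 2 =>
            (∀ i ∈ insert last J, z i = w i) ∧ pA z)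
          = Finset.univ.filter (fun z : Fin m → ZMod 2 => ∀ i ∈ insert last (A ∪ J), z i = w i) := by
        ext z
        simp only [Finset.mem_filter, Finset.mem_univ, true_and]
        constructor
        · rintro ⟨h1, h2⟩ i hi
          rcases Finset.mem_insert.1 hi with h | h
          · subst h; exact h1 i (Finset.mem_insert_self _ _)
          · rcases Finset.mem_union.1 h with h | h
            · have hne : i ≠ last := fun he => hlastA (he ▸ h)
              simpa [hw, hne] using h2 i h
            · exact h1 i (Finset.mem_insert_of_mem h)
        · intro h
          refine ⟨fun i hi => ?_, fun i hi => ?_⟩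
          · rcases Finset.mem_insert.1 hi with h' | h'
            · subst h'; exact h i (Finset.mem_insert_self _ _)
            · exact h i (Finset.mem_insert_of_mem (Finset.mem_union_right _ h'))
          · have hne : i ≠ last := fun he => hlastA (he ▸ hi)
            have h3 := h i (Finset.mem_insert_of_mem (Finset.mem_union_left _ hi))
            simpa [hw, hne] using h3
      have hFB : Finset.univ.filter (fun z : Fin m → ZMod 2 =>
            (∀ i ∈ insert last J, z i = w i) ∧ ¬ pA z)
          = Finset.univ.filter (fun z => P0 z ∧ pJ z) := by
        ext z
        simp only [Finset.mem_filter, Finset.mem_univ, true_and]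
        constructor
        · rintro ⟨h1, h2⟩
          have h0 : z last = 0 := by
            simpa [hw] using h1 last (Finset.mem_insert_self _ _)
          refine ⟨⟨h2, h0⟩, fun i hi => ?_⟩
          have hne : i ≠ last := fun he => hlastJ (he ▸ hi)
          simpa [hw, hne] using h1 i (Finset.mem_insert_of_mem hi)
        · rintro ⟨⟨h2, h0⟩, h1⟩
          refine ⟨fun i hi => ?_, h2⟩
          rcases Finset.mem_insert.1 hi with h' | h'
          · subst h'; simpa [hw] using h0
          · have hne : i ≠ last := fun he => hlastJ (he ▸ h')
            simpa [hw, hne] using h1 i h'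
      have hCeq : 2 ^ (m - (u + 1)) + C = 2 ^ (m - (J.card + 1)) := by
        have h := Finset.card_filter_add_card_filter_not
          (s := Finset.univ.filter (fun z : Fin m → ZMod 2 => ∀ i ∈ insert last J, z i = w i))
          (p := pA)
        rw [Finset.filter_filter, Finset.filter_filter, hFA, hFB, hF1] at h
        rw [← hC] at h
        have hS2 : (Finset.univ.filter (fun z : Fin m → ZMod 2 =>
            ∀ i ∈ insert last (A ∪ J), z i = w i)).card = 2 ^ (m - (u + 1)) := by
          rw [card_fixed, Finset.card_insert_of_notMem hlastAJ, hu]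
        rw [hS2] at h
        exact h
      -- arithmetic
      clear hF1 hFA hFB
      have hb : m - J.card = (m - (J.card + 1)) + 1 := by omega
      have ha : m - u = (m - (u + 1)) + 1 := by omega
      have hexp : m - r - (q - 1) ≤ m - u := by omega
      have hpow : (2 : ℤ) ^ (m - r - (q - 1)) ≤ 2 ^ (m - u) :=
        pow_le_pow_right₀ (by norm_num : (1 : ℤ) ≤ 2) hexp
      have hcast : (C : ℤ) = 2 ^ (m - (J.card + 1)) - 2 ^ (m - (u + 1)) := by
        have h := hCeq
        zify at h
        linarith
      have hb2 : ((2 : ℤ)) ^ (m - J.card) = 2 * 2 ^ (m - (J.card + 1)) := by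
        rw [hb, pow_succ]; ring
      have ha2 : ((2 : ℤ)) ^ (m - u) = 2 * 2 ^ (m - (u + 1)) := by
        rw [ha, pow_succ]; ring
      rw [hTJ]
      push_cast
      rw [hcast]
      linarith
  push_cast at hbal ⊢
  linarith

/-- For every multilinear monomial f of degree at most r (variable set J,
possibly containing z_m, possibly empty), with m ≥ q ≥ 2 and r ≥ 1, adding the
evaluation vector of f to y = Eval((z_1⋯z_{q−1}+1)(z_m+1)) increases the Hamming
weight by at least 2^{m−r−q+1}. -/
theorem weight_increase_any_generator_row
    (m q r : ℕ) (hq : 2 ≤ q) (hm : q ≤ m) (hr : 1 ≤ r)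
    (J : Finset (Fin m)) (hJr : J.card ≤ r) :
    ((2 : ℤ) ^ (m - r - (q - 1)))
      ≤ ((Finset.univ.filter (fun z : Fin m → ZMod 2 =>
            ((∏ i ∈ Finset.univ.filter (fun i : Fin m => (i : ℕ) < q - 1), z i) + 1) *
              (z ⟨m - 1, by omega⟩ + 1) + (∏ j ∈ J, z j) = 1)).card : ℤ)
        - ((Finset.univ.filter (fun z : Fin m → ZMod 2 =>
            ((∏ i ∈ Finset.univ.filter (fun i : Fin m => (i : ℕ) < q - 1), z i) + 1) *
              (z ⟨m - 1, by omega⟩ + 1) = 1)).card : ℤ) := by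
  exact main_aux m q r hq hm hr J hJr ⟨m - 1, by omega⟩ rfl
end
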